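/- arXiv:0902.3851 — 2 statements merged into one kernel-verified Lean document; each statement's English description precedes it below -/
import Mathlib

section
/- Let a ∈ (0,1) and 0 < ā₀ < a/8. Suppose p_n : (0,t̄) → (−1,1) satisfies |p_I − p_n(t)| < ā₀ for all t < t̄ and p_n(t) − a ≥ −1, p_n(t) + a ≤ 1, and let λ_n : (0,t̄) → ℝ be integrable. Then there exists a constant G(a), depending only on a, such that the Duhamel source term I₂ satisfies |∂_x I₂(x,t)| ≤ G(a) ∫_0^t |λ_n(s)| ds for all t < t̄ and all x with |x − p_I| < ā₀. -/
open MeasureTheory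

/-- The 1D heat kernel `K(x,t) = (4πt)^{-1/2} exp(-x²/(4t))`. -/
noncomputable def heatK (x t : ℝ) : ℝ :=
  (Real.sqrt (4 * Real.pi * t))⁻¹ * Real.exp (-(x ^ 2) / (4 * t))

/-- The Neumann heat kernel on `[-1,1]`:
`Γ(x,x';t) = Σ_{k∈ℤ} K(x − (2k + (−1)^{|k|} x'), t)`. -/
noncomputable def heatGamma (x x' t : ℝ) : ℝ :=
  ∑' k : ℤ, heatK (x - (2 * (k : ℝ) + (-1 : ℝ) ^ k.natAbs * x')) t

/-- The flux `λ(s) = −∂ₓ f(p(s), s)` at the free boundary. -/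
noncomputable def flux (f : ℝ → ℝ → ℝ) (p : ℝ → ℝ) (s : ℝ) : ℝ :=
  -deriv (fun x => f x s) (p s)

/-- `ā(s) = min {a, 1 − p(s), 1 + p(s)}`. -/
noncomputable def abar (a : ℝ) (p : ℝ → ℝ) (s : ℝ) : ℝ :=
  min a (min (1 - p s) (1 + p s))

/-- The sup norm `‖h‖_{L^∞(−1,1)}` (for continuous `h`). -/
noncomputable def supNorm (h : ℝ → ℝ) : ℝ := ⨆ x : Set.Icc (-1:ℝ) 1, |h x.1|

/-- Conditions (i)–(iii) on the initial datum `f_I ∈ C²([−1,1])`: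
(i) unique zero `p_I ∈ (−1,1)`, positive to the left, negative to the right;
(ii) Neumann conditions `∂ₓf_I(±1) = 0`;
(iii) `λ_I = −∂ₓ f_I(p_I) > 0` and `−∂ₓ f_I > λ_I/2` on `(p_I − a₀, p_I + a₀)`. -/
structure IsInitialDatum (fI : ℝ → ℝ) (pI a₀ lamI : ℝ) : Prop where
  smooth : ContDiffOn ℝ 2 fI (Set.Icc (-1) 1)
  pI_mem : pI ∈ Set.Ioo (-1 : ℝ) 1
  zero_at : fI pI = 0
  pos_left : ∀ x ∈ Set.Ico (-1 : ℝ) pI, 0 < fI x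
  neg_right : ∀ x ∈ Set.Ioc pI 1, fI x < 0
  neumann_left : derivWithin fI (Set.Icc (-1) 1) (-1) = 0
  neumann_right : derivWithin fI (Set.Icc (-1) 1) 1 = 0
  lamI_eq : lamI = -deriv fI pI
  lamI_pos : 0 < lamI
  slope : ∀ x ∈ Set.Ioo (pI - a₀) (pI + a₀), lamI / 2 < -deriv fI x

/-- A solution `(f, p)` of problem (P) on the time set `J` with parameter `a` and
initial datum `f_I`: `p` is a continuous curve in `(−1,1)`, `p(t)` is the unique zero
of `f(·,t)` (positive to the left, negative to the right), `f(·,t)` is differentiable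
at `p(t)`, the flux is locally integrable on `J`, and the Duhamel identity holds. -/
structure IsSolutionP (a : ℝ) (fI : ℝ → ℝ) (J : Set ℝ) (f : ℝ → ℝ → ℝ) (p : ℝ → ℝ) : Prop where
  p_cont : ContinuousOn p J
  p_mem : ∀ t ∈ J, p t ∈ Set.Ioo (-1 : ℝ) 1
  zero_at : ∀ t ∈ J, f (p t) t = 0
  pos_left : ∀ t ∈ J, ∀ x ∈ Set.Ico (-1 : ℝ) (p t), 0 < f x t
  neg_right : ∀ t ∈ J, ∀ x ∈ Set.Ioc (p t) 1, f x t < 0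
  diff_at : ∀ t ∈ J, DifferentiableAt ℝ (fun x => f x t) (p t)
  flux_loc_int : LocallyIntegrableOn (flux f p) J
  duhamel : ∀ t ∈ J, ∀ x ∈ Set.Icc (-1 : ℝ) 1,
      f x t = (∫ x' in (-1 : ℝ)..1, heatGamma x x' t * fI x')
        + ∫ s in (0 : ℝ)..t,
            (heatGamma x (p s - abar a p s) (t - s)
              - heatGamma x (p s + abar a p s) (t - s)) * flux f p s

/-- The Duhamel iterate with data `(p_n, λ_n)` and initial datum `f_I`. -/
noncomputable def duhamelIterate (a : ℝ) (fI pn lamn : ℝ → ℝ) (x t : ℝ) : ℝ :=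
  (∫ x' in (-1 : ℝ)..1, heatGamma x x' t * fI x')
    + ∫ s in (0 : ℝ)..t,
        (heatGamma x (pn s - a) (t - s) - heatGamma x (pn s + a) (t - s)) * lamn s

/-! Each image term `K(z - y_k(x'), t)` of the Neumann kernel has `z`-derivative at most
`1 / |z - y_k|²`, uniformly in `t`. If `z` lies within `a/4` of `p_n(s)` and
`x' = p_n(s) ± a`, every image point `y_k` is at distance at least `(3a/4) max(1, |k|)` from `z`,
so `Γ(·, p_n(s) ± a; τ)` is Lipschitz there with a constant depending only on `a`. Integrating
against `|λ_n|` makes `z ↦ I₂(z, t)` Lipschitz on the ball of radius `ā₀` around `p_I`, which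
bounds its derivative. -/

open Real

lemma heatK_of_nonpos {t : ℝ} (ht : t ≤ 0) (x : ℝ) : heatK x t = 0 := by
  simp [heatK, Real.sqrt_eq_zero'.2 (by nlinarith [pi_pos] : 4 * π * t ≤ 0)]

lemma heatK_nonneg (x t : ℝ) : 0 ≤ heatK x t := by unfold heatK; positivity

lemma hasDerivAt_heatK (x t : ℝ) :
    HasDerivAt (fun x => heatK x t) (-(x / (2 * t)) * heatK x t) x := by
  refine ((((hasDerivAt_pow 2 x).fun_neg.div_const (4 * t)).exp).const_mul
    (√(4 * π * t))⁻¹).congr_deriv ?_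
  simp only [heatK, Nat.cast_ofNat]
  ring

lemma heatK_sq {t : ℝ} (ht : 0 < t) (x : ℝ) :
    heatK x t ^ 2 = exp (-(x ^ 2 / (2 * t))) / (4 * π * t) := by
  rw [heatK, mul_pow, inv_pow, sq_sqrt (by positivity), sq (exp _), ← exp_add]
  ring_nf

lemma heatK_le_div_sq {t : ℝ} (ht : 0 < t) {x : ℝ} (hx : x ≠ 0) :
    heatK x t ≤ 4 * t / √(4 * π * t) / x ^ 2 := by
  have hexp : exp (-(x ^ 2) / (4 * t)) ≤ 4 * t / x ^ 2 := by
    rw [neg_div, exp_neg, inv_le_comm₀ (exp_pos _) (by positivity), inv_div]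
    linarith [add_one_le_exp (x ^ 2 / (4 * t))]
  calc heatK x t ≤ (√(4 * π * t))⁻¹ * (4 * t / x ^ 2) := by unfold heatK; gcongr
    _ = 4 * t / √(4 * π * t) / x ^ 2 := by ring

lemma abs_div_mul_heatK_le (t : ℝ) {x : ℝ} (hx : x ≠ 0) :
    |x / (2 * t) * heatK x t| ≤ 1 / x ^ 2 := by
  rcases le_or_gt t 0 with ht | ht
  · rw [heatK_of_nonpos ht, mul_zero, abs_zero]; positivity
  refine abs_le_of_sq_le_sq ?_ (by positivity)
  set w := x ^ 2 / (2 * t) with hw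
  have hw0 : 0 < w := by positivity
  have hx2 : x ^ 2 = 2 * t * w := by rw [hw]; field_simp
  have hcube : w ^ 3 ≤ 6 * exp w := by
    have := pow_div_factorial_le_exp w hw0.le 3
    norm_num [Nat.factorial] at this
    linarith
  have hexp : exp (-w) ≤ 6 / w ^ 3 := by
    rw [exp_neg, inv_le_comm₀ (exp_pos _) (by positivity), inv_div]
    linarith
  rw [mul_pow, heatK_sq ht, ← hw, div_pow, hx2]
  calc (2 * t * w) / (2 * t) ^ 2 * (exp (-w) / (4 * π * t))
      ≤ (2 * t * w) / (2 * t) ^ 2 * (6 / w ^ 3 / (4 * π * t)) := by gcongr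
    _ ≤ (1 / (2 * t * w)) ^ 2 := by
      have key : (2 * t * w) / (2 * t) ^ 2 * (6 / w ^ 3 / (4 * π * t))
          = 3 / π * (1 / (2 * t * w)) ^ 2 := by
        field_simp
        ring
      rw [key]
      have : 3 / π ≤ 1 := by rw [div_le_one pi_pos]; exact pi_gt_three.le
      nlinarith [sq_nonneg (1 / (2 * t * w))]

lemma abs_heatK_sub_heatK_le (t : ℝ) {y d z₁ z₂ : ℝ} (hd : 0 < d)
    (H : ∀ z ∈ Set.uIcc z₁ z₂, d ≤ |z - y|) :
    |heatK (z₁ - y) t - heatK (z₂ - y) t| ≤ 1 / d ^ 2 * |z₁ - z₂| := by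
  have hderiv : ∀ z ∈ Set.uIcc z₁ z₂, ‖-((z - y) / (2 * t)) * heatK (z - y) t‖ ≤ 1 / d ^ 2 := by
    intro z hz
    have hzy : z - y ≠ 0 := abs_pos.1 (hd.trans_le (H z hz))
    rw [Real.norm_eq_abs, neg_mul, abs_neg]
    refine (abs_div_mul_heatK_le t hzy).trans ?_
    rw [← sq_abs (z - y)]
    gcongr
    exact H z hz
  simpa only [Real.norm_eq_abs] using Convex.norm_image_sub_le_of_norm_hasDerivWithin_le
    (fun z _ => ((hasDerivAt_heatK (z - y) t).comp_sub_const z y).hasDerivWithinAt) hderiv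
    (convex_uIcc z₁ z₂) Set.right_mem_uIcc Set.left_mem_uIcc

def imagePoint (k : ℤ) (x' : ℝ) : ℝ := 2 * k + (-1) ^ k.natAbs * x'

lemma heatGamma_eq_tsum (x x' t : ℝ) :
    heatGamma x x' t = ∑' k : ℤ, heatK (x - imagePoint k x') t := rfl

lemma heatGamma_of_nonpos {t : ℝ} (ht : t ≤ 0) (x x' : ℝ) : heatGamma x x' t = 0 := by
  simp [heatGamma, heatK_of_nonpos ht]

lemma mul_max_one_abs_le_abs_sub_imagePoint {d z x' : ℝ} (hz : |z| ≤ 1 - d) (hx' : |x'| ≤ 1)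
    (hzx' : d ≤ |z - x'|) (k : ℤ) : d * max 1 |(k : ℝ)| ≤ |z - imagePoint k x'| := by
  rcases eq_or_ne k 0 with rfl | hk
  · simpa [imagePoint] using hzx'
  have hk1 : 1 ≤ |(k : ℝ)| := by exact_mod_cast Int.one_le_abs hk
  have hsign : |(-1 : ℝ) ^ k.natAbs * x'| ≤ 1 := by simpa using hx'
  have himage : 2 * |(k : ℝ)| - 1 ≤ |imagePoint k x'| := by
    have := abs_sub_abs_le_abs_sub (2 * (k : ℝ)) (-((-1) ^ k.natAbs * x'))
    rw [abs_neg, abs_mul, abs_two, sub_neg_eq_add] at this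
    unfold imagePoint
    linarith
  have := abs_sub_abs_le_abs_sub (imagePoint k x') z
  rw [max_eq_right hk1, abs_sub_comm]
  nlinarith [abs_nonneg z]

lemma summable_one_div_max_one_abs_sq : Summable fun k : ℤ => 1 / max 1 |(k : ℝ)| ^ 2 := by
  refine (Real.summable_one_div_int_pow.2 one_lt_two).congr_cofinite ?_
  filter_upwards [Filter.eventually_cofinite_ne 0] with k hk
  rw [max_eq_right (by exact_mod_cast Int.one_le_abs hk), sq_abs]

noncomputable def imageSum : ℝ := ∑' k : ℤ, 1 / max 1 |(k : ℝ)| ^ 2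

lemma imageSum_nonneg : 0 ≤ imageSum := tsum_nonneg fun k => by positivity

lemma abs_heatGamma_sub_heatGamma_le (t : ℝ) {d x' z₁ z₂ : ℝ} (hd : 0 < d) (hx' : |x'| ≤ 1)
    (H : ∀ z ∈ Set.uIcc z₁ z₂, |z| ≤ 1 - d ∧ d ≤ |z - x'|) :
    |heatGamma z₁ x' t - heatGamma z₂ x' t| ≤ imageSum / d ^ 2 * |z₁ - z₂| := by
  rcases le_or_gt t 0 with ht | ht
  · rw [heatGamma_of_nonpos ht, heatGamma_of_nonpos ht, sub_zero, abs_zero]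
    have := imageSum_nonneg
    positivity
  have hdist (z) (hz : z ∈ Set.uIcc z₁ z₂) (k : ℤ) :
      (d * max 1 |(k : ℝ)|) ^ 2 ≤ (z - imagePoint k x') ^ 2 := by
    rw [← sq_abs (z - imagePoint k x')]
    have := mul_max_one_abs_le_abs_sub_imagePoint (H z hz).1 hx' (H z hz).2 k
    gcongr
  have hpos (k : ℤ) : 0 < d * max 1 |(k : ℝ)| := mul_pos hd (by positivity)
  have hsummable (z) (hz : z ∈ Set.uIcc z₁ z₂) :
      Summable fun k : ℤ => heatK (z - imagePoint k x') t := by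
    refine (summable_one_div_max_one_abs_sq.mul_left (4 * t / √(4 * π * t) / d ^ 2)).of_nonneg_of_le
      (fun k => heatK_nonneg _ _) fun k => ?_
    have hne : z - imagePoint k x' ≠ 0 := by
      intro h
      have := hdist z hz k
      rw [h] at this
      nlinarith [hpos k]
    calc heatK (z - imagePoint k x') t ≤ 4 * t / √(4 * π * t) / (z - imagePoint k x') ^ 2 :=
          heatK_le_div_sq ht hne
      _ ≤ 4 * t / √(4 * π * t) / (d * max 1 |(k : ℝ)|) ^ 2 :=
          div_le_div_of_nonneg_left (by positivity) (pow_pos (hpos k) 2) (hdist z hz k)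
      _ = 4 * t / √(4 * π * t) / d ^ 2 * (1 / max 1 |(k : ℝ)| ^ 2) := by ring
  rw [heatGamma_eq_tsum, heatGamma_eq_tsum,
    ← (hsummable z₁ Set.left_mem_uIcc).tsum_sub (hsummable z₂ Set.right_mem_uIcc),
    ← Real.norm_eq_abs]
  refine tsum_of_norm_bounded
    ((summable_one_div_max_one_abs_sq.hasSum.div_const (d ^ 2)).mul_right |z₁ - z₂|) fun k => ?_
  calc ‖heatK (z₁ - imagePoint k x') t - heatK (z₂ - imagePoint k x') t‖
      ≤ 1 / (d * max 1 |(k : ℝ)|) ^ 2 * |z₁ - z₂| :=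
        abs_heatK_sub_heatK_le t (hpos k)
          fun z hz => mul_max_one_abs_le_abs_sub_imagePoint (H z hz).1 hx' (H z hz).2 k
    _ = 1 / max 1 |(k : ℝ)| ^ 2 / d ^ 2 * |z₁ - z₂| := by ring

open Filter Topology in
lemma abs_deriv_le_of_lipschitzOn_of_eq_zero_off {g : ℝ → ℝ} {U T : Set ℝ} {C x : ℝ}
    (hU : U ∈ 𝓝 x) (hC : 0 ≤ C) (hlip : ∀ z ∈ T, ∀ w ∈ T, |g z - g w| ≤ C * |z - w|)
    (hzero : ∀ z ∈ U, z ∉ T → g z = 0) : |deriv g x| ≤ C := by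
  by_cases hd : DifferentiableAt ℝ g x
  swap
  · rwa [deriv_zero_of_not_differentiableAt hd, abs_zero]
  by_cases hxT : x ∈ closure T
  swap
  · have hg : g =ᶠ[𝓝 x] 0 := by
      filter_upwards [hU, isClosed_closure.isOpen_compl.mem_nhds hxT] with z hzU hz
      exact hzero z hzU fun h => hz (subset_closure h)
    rwa [hg.deriv_eq, Pi.zero_def, deriv_const, abs_zero]
  -- `g` may vanish off `T` without `x` lying in `T`; continuity at `x` transfers the bound.
  have hT : ∀ z ∈ T, |g z - g x| ≤ C * |z - x| := fun z hz =>
    ContinuousWithinAt.closure_le hxT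
      (continuousAt_const.sub hd.continuousAt).abs.continuousWithinAt
      ((continuousAt_const.sub continuousAt_id).abs.const_mul C).continuousWithinAt
      fun w hw => hlip z hz w hw
  have hev : ∀ᶠ z in 𝓝 x, z ∈ T ∨ g x = 0 := by
    by_cases hgx : g x = 0
    · exact Eventually.of_forall fun _ => Or.inr hgx
    · filter_upwards [hU, hd.continuousAt.eventually_ne hgx] with z hzU hz
      exact Or.inl (by_contra fun h => hz (hzero z hzU h))
  rw [← Real.norm_eq_abs]
  refine norm_deriv_le_of_lip' hC ?_
  filter_upwards [hU, hev] with z hzU hz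
  simp only [Real.norm_eq_abs]
  by_cases hzT : z ∈ T
  · exact hT z hzT
  · rw [hzero z hzU hzT, hz.resolve_left hzT, sub_self, abs_zero]
    positivity

lemma abs_heatGamma_dipole_sub_le (t : ℝ) {a p z₁ z₂ : ℝ} (ha : 0 < a) (hl : -1 ≤ p - a)
    (hr : p + a ≤ 1) (hz₁ : |z₁ - p| ≤ a / 4) (hz₂ : |z₂ - p| ≤ a / 4) :
    |(heatGamma z₁ (p - a) t - heatGamma z₁ (p + a) t)
        - (heatGamma z₂ (p - a) t - heatGamma z₂ (p + a) t)|
      ≤ 2 * (imageSum / (3 * a / 4) ^ 2) * |z₁ - z₂| := by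
  have hseg : ∀ z ∈ Set.uIcc z₁ z₂, |z - p| ≤ a / 4 := by
    intro z hz
    have := (convex_closedBall p (a / 4)).ordConnected.uIcc_subset
      (by rwa [Metric.mem_closedBall, Real.dist_eq])
      (by rwa [Metric.mem_closedBall, Real.dist_eq]) hz
    rwa [Metric.mem_closedBall, Real.dist_eq] at this
  have hleft := abs_heatGamma_sub_heatGamma_le t (d := 3 * a / 4) (x' := p - a) (by positivity)
    (abs_le.2 ⟨hl, by linarith⟩) fun z hz => by
      have := abs_le.1 (hseg z hz)
      exact ⟨abs_le.2 ⟨by linarith, by linarith⟩, le_abs.2 (Or.inl (by linarith))⟩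
  have hright := abs_heatGamma_sub_heatGamma_le t (d := 3 * a / 4) (x' := p + a) (by positivity)
    (abs_le.2 ⟨by linarith, hr⟩) fun z hz => by
      have := abs_le.1 (hseg z hz)
      exact ⟨abs_le.2 ⟨by linarith, by linarith⟩, le_abs.2 (Or.inr (by linarith))⟩
  calc _ = |(heatGamma z₁ (p - a) t - heatGamma z₂ (p - a) t)
          - (heatGamma z₁ (p + a) t - heatGamma z₂ (p + a) t)| := by ring_nf
    _ ≤ _ := (abs_sub _ _).trans (by linarith)

noncomputable def duhamelSourceIntegrand (a t : ℝ) (p lam : ℝ → ℝ) (z s : ℝ) : ℝ :=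
  (heatGamma z (p s - a) (t - s) - heatGamma z (p s + a) (t - s)) * lam s

lemma abs_integral_duhamelSourceIntegrand_sub_le {a t z w : ℝ} {p lam : ℝ → ℝ} (ha : 0 < a)
    (ht : 0 ≤ t) (hp : ∀ s ∈ Set.Ioc 0 t, -1 ≤ p s - a ∧ p s + a ≤ 1)
    (hz : ∀ s ∈ Set.Ioc 0 t, |z - p s| ≤ a / 4) (hw : ∀ s ∈ Set.Ioc 0 t, |w - p s| ≤ a / 4)
    (hlam : IntervalIntegrable lam volume 0 t)
    (hFz : IntervalIntegrable (duhamelSourceIntegrand a t p lam z) volume 0 t)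
    (hFw : IntervalIntegrable (duhamelSourceIntegrand a t p lam w) volume 0 t) :
    |(∫ s in (0 : ℝ)..t, duhamelSourceIntegrand a t p lam z s)
        - ∫ s in (0 : ℝ)..t, duhamelSourceIntegrand a t p lam w s|
      ≤ 2 * (imageSum / (3 * a / 4) ^ 2) * (∫ s in (0 : ℝ)..t, |lam s|) * |z - w| := by
  rw [← intervalIntegral.integral_sub hFz hFw, ← Real.norm_eq_abs]
  refine (intervalIntegral.norm_integral_le_of_norm_le ht (ae_of_all _ fun s hs => ?_)
    (hlam.abs.const_mul (2 * (imageSum / (3 * a / 4) ^ 2) * |z - w|))).trans_eq ?_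
  · rw [Real.norm_eq_abs, duhamelSourceIntegrand, duhamelSourceIntegrand, ← sub_mul, abs_mul]
    exact mul_le_mul_of_nonneg_right (abs_heatGamma_dipole_sub_le (t - s) ha (hp s hs).1
      (hp s hs).2 (hz s hs) (hw s hs)) (abs_nonneg _)
  · rw [intervalIntegral.integral_const_mul]
    ring

/-- Estimate on the spatial derivative of the Duhamel source term `I₂`
(first part of Lemma 2.4): `|∂ₓ I₂(x,t)| ≤ G(a) ∫₀ᵗ |λ_n(s)| ds`. -/
theorem statement4 (a : ℝ) (ha : a ∈ Set.Ioo (0:ℝ) 1) :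
    ∃ G : ℝ, ∀ (abar₀ tbar pI : ℝ) (pn lamn : ℝ → ℝ),
      0 < abar₀ → abar₀ < a / 8 → pI ∈ Set.Ioo (-1:ℝ) 1 →
      (∀ t, 0 < t → t < tbar →
        |pI - pn t| < abar₀ ∧ -1 ≤ pn t - a ∧ pn t + a ≤ 1) →
      MeasureTheory.IntegrableOn lamn (Set.Ioo 0 tbar) →
      ∀ t, 0 < t → t < tbar → ∀ x, |x - pI| < abar₀ →
        |deriv (fun z => ∫ s in (0:ℝ)..t,
            (heatGamma z (pn s - a) (t - s) - heatGamma z (pn s + a) (t - s)) * lamn s) x|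
          ≤ G * ∫ s in (0:ℝ)..t, |lamn s| := by
  refine ⟨2 * (imageSum / (3 * a / 4) ^ 2), ?_⟩
  intro abar₀ tbar pI pn lamn _ habar₀ _ hpn hlam t ht htbar x hx
  have hlam' : IntervalIntegrable lamn volume 0 t :=
    (intervalIntegrable_iff_integrableOn_Ioc_of_le ht.le).2
      (hlam.mono_set fun s hs => ⟨hs.1, hs.2.trans_lt htbar⟩)
  have hnear : ∀ z ∈ Metric.ball pI abar₀, ∀ s ∈ Set.Ioc 0 t, |z - pn s| ≤ a / 4 := by
    intro z hz s hs
    rw [Metric.mem_ball, Real.dist_eq] at hz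
    have := (hpn s hs.1 (hs.2.trans_lt htbar)).1
    linarith [abs_sub_le z pI (pn s)]
  -- `pn` need not be measurable, so the integrand may fail to be integrable and the
  -- integral then takes the junk value `0`; the Lipschitz bound only holds on `T`.
  refine abs_deriv_le_of_lipschitzOn_of_eq_zero_off (U := Metric.ball pI abar₀)
    (T := {z ∈ Metric.ball pI abar₀ |
      IntervalIntegrable (duhamelSourceIntegrand a t pn lamn z) volume 0 t})
    (Metric.isOpen_ball.mem_nhds ?_) ?_ ?_ ?_
  · rwa [Metric.mem_ball, Real.dist_eq]
  · have := imageSum_nonneg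
    have : 0 ≤ ∫ s in (0 : ℝ)..t, |lamn s| :=
      intervalIntegral.integral_nonneg ht.le fun s _ => abs_nonneg (lamn s)
    positivity
  · rintro z ⟨hz, hFz⟩ w ⟨hw, hFw⟩
    exact abs_integral_duhamelSourceIntegrand_sub_le ha.1 ht.le
      (fun s hs => (hpn s hs.1 (hs.2.trans_lt htbar)).2) (hnear z hz) (hnear w hw) hlam' hFz hFw
  · exact fun z hz hzT => intervalIntegral.integral_undef fun h => hzT ⟨hz, h⟩
end

section
/- Let a ∈ (0,1), let f_I ∈ C²([−1,1]), and let 0 < ā₀ < a/8. There exists a constant c(a) > 0, depending only on a, with the following property: if t̄ ≤ c(a), if |p_I − p_n(t)| < ā₀ and p_n(t) ± a ∈ [−1,1] for all t < t̄, and if |λ_n(t)| ≤ 2‖f_I‖_{L^∞(−1,1)}/√t for all t < t̄, then the Duhamel iterate f with data (p_n, λ_n) satisfies sup_{|x−p_I|<ā₀} |∂_x f(x,t)| ≤ 2‖f_I‖_{L^∞(−1,1)}/√t for all 0 < t < t̄. -/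
open MeasureTheory

/-!
Split the iterate as `f = initialTerm + sourceTerm`. In the image sum defining `Γ`, only the
direct term `K(x - x')` is singular as `t → 0`: for `x` within `a/4` of `p_n(s)`, all other
image points and both sources `p_n(s) ± a` stay at distance `≥ 3a/4` from `x`, and there
`|∂ₓK(·,τ)| = O(√τ)`. Hence `|∂ₓ initialTerm| ≤ ‖f_I‖ (∫ |∂ₓK| + O(√t)) ≤ ‖f_I‖ (1/√t + O(√t))`,
while `sourceTerm` is Lipschitz near `x` with constant `∫₀ᵗ O(√t) · 2‖f_I‖/√s ds = O(‖f_I‖ t)`.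
For `t ≤ c(a)` both error terms are at most `‖f_I‖/(2√t)`.

Nothing makes `λ_n` measurable, so `sourceTerm` is only Lipschitz on the set of `x` where its
integrand is integrable, and is `0` (the junk value of the integral) elsewhere; the derivative
bound survives this.
-/

open Real Filter Topology Set

lemma two_mul_sqrt_le_sqrt_four_pi_mul {t : ℝ} (ht : 0 ≤ t) :
    2 * Real.sqrt t ≤ Real.sqrt (4 * π * t) := by
  have h : 2 * Real.sqrt t = Real.sqrt (4 * t) := by
    rw [Real.sqrt_mul (by norm_num), show (4 : ℝ) = 2 ^ 2 by norm_num, Real.sqrt_sq (by norm_num)]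
  rw [h]
  gcongr
  linarith [pi_gt_three]

lemma exp_neg_le_two_div_sq {u : ℝ} (hu : 0 < u) : exp (-u) ≤ 2 / u ^ 2 := by
  rw [exp_neg, inv_le_comm₀ (exp_pos _) (by positivity), inv_div]
  simpa using Real.pow_div_factorial_le_exp u hu.le 2

lemma integral_rpow_neg_half (t : ℝ) :
    ∫ s in (0 : ℝ)..t, s ^ (-(1 / 2) : ℝ) = 2 * Real.sqrt t := by
  rw [integral_rpow (Or.inl (by norm_num)), Real.sqrt_eq_rpow]
  norm_num
  ring

lemma mul_one_div_sqrt_add_le {C M t : ℝ} (hC : 0 ≤ C) (hM : 0 ≤ M) (ht : 0 < t) (ht1 : t ≤ 1)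
    (hCt : 16 * C * t ≤ 1) :
    M * (1 / Real.sqrt t + 2 * C * Real.sqrt t) + 8 * C * M * t ≤ 2 * M / Real.sqrt t := by
  have hs := Real.sqrt_pos.2 ht
  have hs1 : Real.sqrt t ≤ 1 := Real.sqrt_le_one.2 ht1
  calc M * (1 / Real.sqrt t + 2 * C * Real.sqrt t) + 8 * C * M * t
      = M * (1 + 2 * C * t + 8 * C * t * Real.sqrt t) / Real.sqrt t := by
        field_simp
        rw [Real.sq_sqrt ht.le]
        ring
    _ ≤ M * 2 / Real.sqrt t := by
        gcongr
        nlinarith [mul_le_mul_of_nonneg_left hs1 (by positivity : 0 ≤ 8 * C * t)]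
    _ = 2 * M / Real.sqrt t := by ring

lemma HasDerivAt.abs_le_of_lipschitz_of_eq_zero_off {B : ℝ → ℝ} {x dB ε r : ℝ} {S : Set ℝ}
    (hB : HasDerivAt B dB x) (hε : 0 ≤ ε) (hr : 0 < r)
    (hlip : ∀ z₁ ∈ S ∩ Metric.ball x r, ∀ z₂ ∈ S ∩ Metric.ball x r,
      |B z₁ - B z₂| ≤ ε * |z₁ - z₂|)
    (hzero : ∀ z ∈ Metric.ball x r, z ∉ S → B z = 0) : |dB| ≤ ε := by
  have hslope := hasDerivAt_iff_tendsto_slope.1 hB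
  have hcont : Tendsto B (𝓝[≠] x) (𝓝 (B x)) :=
    hB.continuousAt.tendsto.mono_left nhdsWithin_le_nhds
  have hball : ∀ᶠ z in 𝓝[≠] x, z ∈ Metric.ball x r :=
    eventually_nhdsWithin_of_eventually_nhds (Metric.ball_mem_nhds x hr)
  by_cases hfreq : ∃ᶠ z in 𝓝[≠] x, z ∉ S
  · have hB0 : ∃ᶠ z in 𝓝[≠] x, B z = 0 :=
      (hfreq.and_eventually hball).mono fun z hz => hzero z hz.2 hz.1
    have hBx : B x = 0 := tendsto_nhds_unique_of_frequently_eq hcont tendsto_const_nhds hB0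
    have hdB : dB = 0 := tendsto_nhds_unique_of_frequently_eq hslope tendsto_const_nhds
      (hB0.mono fun z hz => by simp [slope_def_field, hz, hBx])
    rw [hdB, abs_zero]
    exact hε
  · have hS : ∀ᶠ z in 𝓝[≠] x, z ∈ S ∩ Metric.ball x r :=
      ((not_frequently.1 hfreq).mono fun z hz => not_not.1 hz).and hball
    -- `x` itself need not lie in `S`: pass to the limit `z₂ → x` inside `S`.
    have hlipx : ∀ z ∈ S ∩ Metric.ball x r, |B z - B x| ≤ ε * |z - x| := by
      intro z hz
      have hid : Tendsto (fun w => w) (𝓝[≠] x) (𝓝 x) := nhdsWithin_le_nhds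
      have hlim : Tendsto (fun w => ε * |z - w| - |B z - B w|) (𝓝[≠] x)
          (𝓝 (ε * |z - x| - |B z - B x|)) :=
        ((tendsto_const_nhds.sub hid).abs.const_mul ε).sub (tendsto_const_nhds.sub hcont).abs
      have := ge_of_tendsto hlim (hS.mono fun w hw => sub_nonneg.2 (hlip z hz w hw))
      linarith
    refine le_of_tendsto hslope.abs ?_
    filter_upwards [hS, self_mem_nhdsWithin] with z hz hzx
    rw [slope_def_field, abs_div, div_le_iff₀ (abs_pos.2 (sub_ne_zero.2 hzx))]
    exact hlipx z hz

lemma abs_deriv_add_le_of_lipschitz_of_eq_zero_off {A B : ℝ → ℝ} {x dA ε r : ℝ} {S : Set ℝ}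
    (hA : HasDerivAt A dA x) (hε : 0 ≤ ε) (hr : 0 < r)
    (hlip : ∀ z₁ ∈ S ∩ Metric.ball x r, ∀ z₂ ∈ S ∩ Metric.ball x r,
      |B z₁ - B z₂| ≤ ε * |z₁ - z₂|)
    (hzero : ∀ z ∈ Metric.ball x r, z ∉ S → B z = 0) :
    |deriv (fun z => A z + B z) x| ≤ |dA| + ε := by
  by_cases hd : DifferentiableAt ℝ (fun z => A z + B z) x
  · set d := deriv (fun z => A z + B z) x
    have hB : HasDerivAt B (d - dA) x :=
      (hd.hasDerivAt.fun_sub hA).congr_of_eventuallyEq (.of_forall fun z => by ring)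
    calc |d| = |dA + (d - dA)| := by rw [add_sub_cancel]
      _ ≤ |dA| + |d - dA| := abs_add_le _ _
      _ ≤ |dA| + ε := by
        gcongr
        exact hB.abs_le_of_lipschitz_of_eq_zero_off hε hr hlip hzero
  · rw [deriv_zero_of_not_differentiableAt hd, abs_zero]
    positivity

namespace HeatKernel

noncomputable def heatKDeriv (x t : ℝ) : ℝ := -(x / (2 * t)) * heatK x t

lemma heatK_nonneg (x t : ℝ) : 0 ≤ heatK x t := by
  unfold heatK; positivity

lemma heatK_zero_right (x : ℝ) : heatK x 0 = 0 := by simp [heatK]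

lemma heatGamma_zero_right (x x' : ℝ) : heatGamma x x' 0 = 0 := by
  simp [heatGamma, heatK_zero_right]

lemma continuous_heatK (t : ℝ) : Continuous (fun x => heatK x t) := by
  unfold heatK; fun_prop

lemma continuous_heatKDeriv (t : ℝ) : Continuous (fun x => heatKDeriv x t) :=
  (continuous_id.div_const _).neg.mul (continuous_heatK t)

lemma hasDerivAt_heatK (x t : ℝ) : HasDerivAt (fun y => heatK y t) (heatKDeriv x t) x := by
  have hexp : HasDerivAt (fun y : ℝ => -y ^ 2 / (4 * t)) (-(x / (2 * t))) x :=
    ((hasDerivAt_pow 2 x).fun_neg.div_const (4 * t)).congr_deriv (by norm_num; ring)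
  exact (hexp.exp.const_mul (Real.sqrt (4 * π * t))⁻¹).congr_deriv
    (by simp only [heatKDeriv, heatK]; ring)

lemma abs_heatKDeriv {t : ℝ} (ht : 0 < t) (x : ℝ) :
    |heatKDeriv x t| = |x| / (2 * t) * heatK x t := by
  rw [heatKDeriv, abs_mul, abs_neg, abs_div, abs_of_pos (by positivity : 0 < 2 * t),
    abs_of_nonneg (heatK_nonneg x t)]

lemma heatK_le_of_le_abs {t m x : ℝ} (ht : 0 ≤ t) (hm : 0 ≤ m) (hmx : m ≤ |x|) :
    heatK x t ≤ (Real.sqrt (4 * π * t))⁻¹ * exp (-m ^ 2 / (4 * t)) := by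
  have hsq : m ^ 2 ≤ x ^ 2 := by rw [← sq_abs x]; gcongr
  unfold heatK
  gcongr

lemma abs_heatKDeriv_le {t m P x : ℝ} (ht : 0 < t) (hm : 0 ≤ m) (hmx : m ≤ |x|)
    (hxP : |x| ≤ P) :
    |heatKDeriv x t| ≤ P / (2 * t) * ((Real.sqrt (4 * π * t))⁻¹ * exp (-m ^ 2 / (4 * t))) := by
  have hP : 0 ≤ P := (abs_nonneg x).trans hxP
  rw [abs_heatKDeriv ht]
  exact mul_le_mul (by gcongr) (heatK_le_of_le_abs ht.le hm hmx) (heatK_nonneg x t)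
    (by positivity)

/-- The Gaussian factor `exp (-d²/4τ)` is `O(τ²)`: this turns the `τ^{-3/2}` blow-up of `∂ₓK`
into a factor `√τ` away from the diagonal. -/
lemma abs_heatKDeriv_le_of_far {τ d m P x : ℝ} (hτ : 0 < τ) (hτ1 : τ ≤ 1) (hd : 0 < d)
    (hm : 0 ≤ m) (hmx : m + d ≤ |x|) (hxP : |x| ≤ P) :
    |heatKDeriv x τ| ≤ 8 / d ^ 4 * (P * exp (-m ^ 2 / 4)) * Real.sqrt τ := by
  have hP : 0 ≤ P := (abs_nonneg x).trans hxP
  have hsplit : exp (-(m + d) ^ 2 / (4 * τ)) ≤ exp (-m ^ 2 / 4) * exp (-(d ^ 2 / (4 * τ))) := by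
    rw [← exp_add]
    gcongr
    have hm4 : m ^ 2 / 4 ≤ m ^ 2 / (4 * τ) := by gcongr; linarith
    calc -(m + d) ^ 2 / (4 * τ) ≤ -(m ^ 2 / (4 * τ)) - d ^ 2 / (4 * τ) := by
          rw [neg_div, ← neg_add', neg_le_neg_iff, ← add_div]
          gcongr
          nlinarith [mul_nonneg hm hd.le]
      _ ≤ -m ^ 2 / 4 + -(d ^ 2 / (4 * τ)) := by rw [neg_div]; linarith
  have hdecay : exp (-(d ^ 2 / (4 * τ))) ≤ 32 * τ ^ 2 / d ^ 4 :=
    (exp_neg_le_two_div_sq (by positivity)).trans_eq (by field_simp; ring)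
  calc |heatKDeriv x τ|
      ≤ P / (2 * τ) * ((Real.sqrt (4 * π * τ))⁻¹ * exp (-(m + d) ^ 2 / (4 * τ))) :=
        abs_heatKDeriv_le hτ (by positivity) hmx hxP
    _ ≤ P / (2 * τ) * ((2 * Real.sqrt τ)⁻¹ * (exp (-m ^ 2 / 4) * (32 * τ ^ 2 / d ^ 4))) := by
        gcongr
        · exact two_mul_sqrt_le_sqrt_four_pi_mul hτ.le
        · exact hsplit.trans (by gcongr)
    _ = 8 / d ^ 4 * (P * exp (-m ^ 2 / 4)) * Real.sqrt τ := by
        have hsqrt : 0 < Real.sqrt τ := Real.sqrt_pos.2 hτ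
        field_simp
        rw [Real.sq_sqrt hτ.le]
        ring

/-- `∂ₓK(·,t)` has one sign on each half-line, so its total variation is `2 K(0,t)`. -/
lemma integral_abs_heatKDeriv_le {t u v : ℝ} (ht : 0 < t) (hu : u ≤ 0) (hv : 0 ≤ v) :
    ∫ y in u..v, |heatKDeriv y t| ≤ 1 / Real.sqrt t := by
  have hint : ∀ c d, IntervalIntegrable (fun y => heatKDeriv y t) volume c d :=
    fun c d => (continuous_heatKDeriv t).intervalIntegrable c d
  have hftc : ∀ c d, ∫ y in c..d, heatKDeriv y t = heatK d t - heatK c t := fun c d =>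
    intervalIntegral.integral_eq_sub_of_hasDerivAt (fun y _ => hasDerivAt_heatK y t) (hint c d)
  have hsign : ∀ y, heatKDeriv y t = -(y / (2 * t) * heatK y t) := fun y => neg_mul _ _
  have hleft : ∫ y in u..0, |heatKDeriv y t| = heatK 0 t - heatK u t := by
    rw [← hftc]
    refine intervalIntegral.integral_congr fun y hy => abs_of_nonneg ?_
    rw [uIcc_of_le hu] at hy
    rw [hsign, neg_nonneg]
    exact mul_nonpos_of_nonpos_of_nonneg (div_nonpos_of_nonpos_of_nonneg hy.2 (by positivity))
      (heatK_nonneg y t)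
  have hright : ∫ y in (0 : ℝ)..v, |heatKDeriv y t| = heatK 0 t - heatK v t := by
    rw [show heatK 0 t - heatK v t = -∫ y in (0 : ℝ)..v, heatKDeriv y t by rw [hftc]; ring,
      ← intervalIntegral.integral_neg]
    refine intervalIntegral.integral_congr fun y hy => abs_of_nonpos ?_
    rw [uIcc_of_le hv] at hy
    rw [hsign, neg_nonpos]
    exact mul_nonneg (div_nonneg hy.1 (by positivity)) (heatK_nonneg y t)
  have hK0 : heatK 0 t = (Real.sqrt (4 * π * t))⁻¹ := by simp [heatK]
  have hcont := (continuous_heatKDeriv t).abs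
  rw [← intervalIntegral.integral_add_adjacent_intervals (hcont.intervalIntegrable u 0)
    (hcont.intervalIntegrable 0 v), hleft, hright]
  have hs : 0 < Real.sqrt t := Real.sqrt_pos.2 ht
  have hsq : (Real.sqrt (4 * π * t))⁻¹ ≤ (2 * Real.sqrt t)⁻¹ :=
    inv_anti₀ (by positivity) (two_mul_sqrt_le_sqrt_four_pi_mul ht.le)
  rw [mul_inv] at hsq
  rw [one_div]
  linarith [heatK_nonneg u t, heatK_nonneg v t]

/-- By definition, `heatGamma x x' t = ∑' k, heatK (x - reflPt x' k) t`. -/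
noncomputable def reflPt (x' : ℝ) (k : ℤ) : ℝ := 2 * k + (-1 : ℝ) ^ k.natAbs * x'

noncomputable def heatGammaDeriv (x x' t : ℝ) : ℝ := ∑' k : ℤ, heatKDeriv (x - reflPt x' k) t

lemma reflPt_zero (x' : ℝ) : reflPt x' 0 = x' := by simp [reflPt]

lemma continuous_reflPt (k : ℤ) : Continuous (fun x' => reflPt x' k) := by
  unfold reflPt; fun_prop

lemma abs_reflPt_le {x' : ℝ} (hx' : |x'| ≤ 1) (k : ℤ) : |reflPt x' k| ≤ 2 * |(k : ℝ)| + 1 := by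
  have h := abs_add_le (2 * (k : ℝ)) ((-1 : ℝ) ^ k.natAbs * x')
  rw [abs_mul, abs_mul, abs_pow, abs_neg, abs_one, one_pow, one_mul, abs_two] at h
  unfold reflPt
  linarith

lemma le_abs_reflPt {x' : ℝ} (hx' : |x'| ≤ 1) (k : ℤ) : 2 * |(k : ℝ)| - 1 ≤ |reflPt x' k| := by
  have h := abs_sub_abs_le_abs_sub (2 * (k : ℝ)) (-((-1 : ℝ) ^ k.natAbs * x'))
  rw [abs_neg, abs_mul, abs_mul, abs_pow, abs_neg, abs_one, one_pow, one_mul, abs_two,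
    sub_neg_eq_add] at h
  unfold reflPt
  linarith

/-- Comparison with the geometric series `∑ exp (-|k|/τ)`, using `u² ≥ 2u - 1`. -/
lemma summable_lattice_gaussian {τ A : ℝ} (B : ℝ) (hτ : 0 < τ) (hA : 0 ≤ A) :
    Summable (fun k : ℤ =>
      (2 * |(k : ℝ)| + A) * exp (-(max (2 * |(k : ℝ)| - B) 0) ^ 2 / (4 * τ))) := by
  have hnat : Summable (fun n : ℕ => (2 * (n : ℝ) + A) * exp (-(1 / τ) * n)) := by
    have h1 := summable_pow_mul_exp_neg_nat_mul 1 (one_div_pos.2 hτ)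
    have h0 := summable_pow_mul_exp_neg_nat_mul 0 (one_div_pos.2 hτ)
    exact ((h1.mul_left 2).add (h0.mul_left A)).congr fun n => by ring
  have hgeom : Summable (fun k : ℤ => (2 * |(k : ℝ)| + A) * exp (-(1 / τ) * |(k : ℝ)|)) :=
    Summable.of_nat_of_neg (by simpa using hnat) (by simpa using hnat)
  refine (hgeom.mul_left (exp ((2 * B + 1) / (4 * τ)))).of_nonneg_of_le
    (fun k => by positivity) (fun k => ?_)
  rw [mul_left_comm, ← exp_add]
  gcongr
  have hu : 2 * |(k : ℝ)| - B ≤ max (2 * |(k : ℝ)| - B) 0 := le_max_left _ _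
  have hquad : -(max (2 * |(k : ℝ)| - B) 0) ^ 2 ≤ 2 * B + 1 - 4 * |(k : ℝ)| := by
    nlinarith [sq_nonneg (max (2 * |(k : ℝ)| - B) 0 - 1)]
  calc -(max (2 * |(k : ℝ)| - B) 0) ^ 2 / (4 * τ) ≤ (2 * B + 1 - 4 * |(k : ℝ)|) / (4 * τ) := by
        gcongr
    _ = (2 * B + 1) / (4 * τ) + -(1 / τ) * |(k : ℝ)| := by
        field_simp
        ring

noncomputable def nearMajorant (τ : ℝ) (k : ℤ) : ℝ :=
  (Real.sqrt (4 * π * τ))⁻¹ * (1 + 1 / (2 * τ)) *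
    ((2 * |(k : ℝ)| + 4) * exp (-(max (2 * |(k : ℝ)| - 4) 0) ^ 2 / (4 * τ)))

lemma summable_nearMajorant {τ : ℝ} (hτ : 0 < τ) : Summable (nearMajorant τ) :=
  (summable_lattice_gaussian 4 hτ (by norm_num)).mul_left _

lemma nearMajorant_nonneg {τ : ℝ} (hτ : 0 < τ) (k : ℤ) : 0 ≤ nearMajorant τ k := by
  unfold nearMajorant; positivity

lemma abs_sub_reflPt_mem_Icc {x x' : ℝ} (hx : |x| ≤ 3) (hx' : |x'| ≤ 1) (k : ℤ) :
    |x - reflPt x' k| ∈ Icc (max (2 * |(k : ℝ)| - 4) 0) (2 * |(k : ℝ)| + 4) := by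
  have h1 := le_abs_reflPt hx' k
  have h2 := abs_reflPt_le hx' k
  have h3 := abs_sub_abs_le_abs_sub (reflPt x' k) x
  rw [abs_sub_comm (reflPt x' k)] at h3
  exact ⟨max_le (by linarith) (abs_nonneg _), (abs_sub _ _).trans (by linarith)⟩

lemma heatK_le_nearMajorant {τ x x' : ℝ} (hτ : 0 < τ) (hx : |x| ≤ 3) (hx' : |x'| ≤ 1)
    (k : ℤ) : heatK (x - reflPt x' k) τ ≤ nearMajorant τ k := by
  have hk := abs_nonneg (k : ℝ)
  have hone : 1 ≤ (1 + 1 / (2 * τ)) * (2 * |(k : ℝ)| + 4) := by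
    nlinarith [(by positivity : 0 ≤ 1 / (2 * τ))]
  refine (heatK_le_of_le_abs hτ.le (le_max_right _ _) (abs_sub_reflPt_mem_Icc hx hx' k).1).trans ?_
  calc _ ≤ (Real.sqrt (4 * π * τ))⁻¹ * exp (-(max (2 * |(k : ℝ)| - 4) 0) ^ 2 / (4 * τ)) *
        ((1 + 1 / (2 * τ)) * (2 * |(k : ℝ)| + 4)) := le_mul_of_one_le_right (by positivity) hone
    _ = nearMajorant τ k := by unfold nearMajorant; ring

lemma abs_heatKDeriv_le_nearMajorant {τ x x' : ℝ} (hτ : 0 < τ) (hx : |x| ≤ 3) (hx' : |x'| ≤ 1)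
    (k : ℤ) : |heatKDeriv (x - reflPt x' k) τ| ≤ nearMajorant τ k := by
  obtain ⟨hlo, hhi⟩ := abs_sub_reflPt_mem_Icc hx hx' k
  refine (abs_heatKDeriv_le hτ (le_max_right _ _) hlo hhi).trans (le_of_sub_nonneg ?_)
  have hk := abs_nonneg (k : ℝ)
  unfold nearMajorant
  ring_nf
  positivity

lemma hasDerivAt_heatGamma {τ x x' : ℝ} (hτ : 0 < τ) (hx' : |x'| ≤ 1) (hx : x ∈ Ioo (-3) 3) :
    HasDerivAt (fun z => heatGamma z x' τ) (heatGammaDeriv x x' τ) x := by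
  have habs : ∀ y ∈ Ioo (-3 : ℝ) 3, |y| ≤ 3 := fun y hy => abs_le.2 ⟨hy.1.le, hy.2.le⟩
  refine hasDerivAt_tsum_of_isPreconnected (g := fun k y => heatK (y - reflPt x' k) τ)
    (g' := fun k y => heatKDeriv (y - reflPt x' k) τ) (summable_nearMajorant hτ) isOpen_Ioo
    isPreconnected_Ioo (fun k y _ => ?_) (fun k y hy => abs_heatKDeriv_le_nearMajorant hτ
      (habs y hy) hx' k) hx ?_ hx
  · exact (hasDerivAt_heatK _ τ).comp_sub_const y _
  · exact (summable_nearMajorant hτ).of_nonneg_of_le (fun k => heatK_nonneg _ _)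
      (heatK_le_nearMajorant hτ (habs x hx) hx')

lemma continuousOn_heatGamma_right {τ x : ℝ} (hτ : 0 < τ) (hx : |x| ≤ 3) :
    ContinuousOn (fun x' => heatGamma x x' τ) (Icc (-1) 1) := by
  refine continuousOn_tsum (fun k => ((continuous_heatK τ).comp
    (continuous_const.sub (continuous_reflPt k))).continuousOn) (summable_nearMajorant hτ)
    (fun k x' hx' => ?_)
  rw [Real.norm_eq_abs, abs_of_nonneg (heatK_nonneg _ _)]
  exact heatK_le_nearMajorant hτ hx (abs_le.2 hx') k

lemma continuousOn_heatGammaDeriv_right {τ x : ℝ} (hτ : 0 < τ) (hx : |x| ≤ 3) :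
    ContinuousOn (fun x' => heatGammaDeriv x x' τ) (Icc (-1) 1) :=
  continuousOn_tsum (fun k => ((continuous_heatKDeriv τ).comp
    (continuous_const.sub (continuous_reflPt k))).continuousOn) (summable_nearMajorant hτ)
    (fun k _ hx' => abs_heatKDeriv_le_nearMajorant hτ hx (abs_le.2 hx') k)

lemma abs_heatGammaDeriv_le {τ x x' : ℝ} (hτ : 0 < τ) (hx : |x| ≤ 3) (hx' : |x'| ≤ 1) :
    |heatGammaDeriv x x' τ| ≤ ∑' k, nearMajorant τ k :=
  tsum_of_norm_bounded (f := fun k => heatKDeriv (x - reflPt x' k) τ)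
    (summable_nearMajorant hτ).hasSum (abs_heatKDeriv_le_nearMajorant hτ hx hx')

noncomputable def farWeight (a : ℝ) (k : ℤ) : ℝ :=
  8 / (3 * a / 4) ^ 4 * ((2 * |(k : ℝ)| + 3) * exp (-(max (2 * |(k : ℝ)| - 2) 0) ^ 2 / 4))

noncomputable def farConst (a : ℝ) : ℝ := ∑' k, farWeight a k

lemma summable_farWeight (a : ℝ) : Summable (farWeight a) := by
  have h := (summable_lattice_gaussian 2 one_pos (by norm_num : (0 : ℝ) ≤ 3)).mul_left
    (8 / (3 * a / 4) ^ 4)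
  exact h.congr fun k => by rw [farWeight, mul_one]

lemma farWeight_nonneg {a : ℝ} (ha : 0 < a) (k : ℤ) : 0 ≤ farWeight a k := by
  unfold farWeight; positivity

lemma farConst_pos {a : ℝ} (ha : 0 < a) : 0 < farConst a :=
  (summable_farWeight a).tsum_pos (farWeight_nonneg ha) 0 (by unfold farWeight; positivity)

lemma abs_sub_reflPt_mem_Icc_of_far {a x x' : ℝ} (ha : 0 ≤ a) (hx : |x| ≤ 1 - 3 * a / 4)
    (hx' : |x'| ≤ 1) {k : ℤ} (hk : k ≠ 0 ∨ 3 * a / 4 ≤ |x - x'|) :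
    |x - reflPt x' k| ∈ Icc (max (2 * |(k : ℝ)| - 2) 0 + 3 * a / 4) (2 * |(k : ℝ)| + 3) := by
  have h1 := le_abs_reflPt hx' k
  have h2 := abs_reflPt_le hx' k
  have h3 := abs_sub_abs_le_abs_sub (reflPt x' k) x
  rw [abs_sub_comm (reflPt x' k)] at h3
  refine ⟨?_, (abs_sub _ _).trans (by linarith)⟩
  by_cases hk0 : k = 0
  · subst hk0
    simpa [reflPt_zero] using hk.resolve_left (not_not.2 rfl)
  · have hk1 : (1 : ℝ) ≤ |(k : ℝ)| := by
      rw [← Int.cast_abs]; exact_mod_cast Int.one_le_abs hk0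
    rw [max_eq_left (by linarith)]
    linarith

lemma abs_heatKDeriv_le_farWeight {a τ y : ℝ} (ha : 0 < a) (hτ : 0 < τ) (hτ1 : τ ≤ 1) {k : ℤ}
    (hy : |y| ∈ Icc (max (2 * |(k : ℝ)| - 2) 0 + 3 * a / 4) (2 * |(k : ℝ)| + 3)) :
    |heatKDeriv y τ| ≤ farWeight a k * Real.sqrt τ :=
  abs_heatKDeriv_le_of_far hτ hτ1 (by positivity) (le_max_right _ _) hy.1 hy.2

lemma abs_heatGammaDeriv_le_farConst {a τ x x' : ℝ} (ha : 0 < a) (hτ : 0 < τ) (hτ1 : τ ≤ 1)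
    (hx : |x| ≤ 1 - 3 * a / 4) (hx' : |x'| ≤ 1) (hxx' : 3 * a / 4 ≤ |x - x'|) :
    |heatGammaDeriv x x' τ| ≤ farConst a * Real.sqrt τ :=
  tsum_of_norm_bounded (f := fun k => heatKDeriv (x - reflPt x' k) τ)
    ((summable_farWeight a).hasSum.mul_right _) fun _ => abs_heatKDeriv_le_farWeight ha hτ hτ1
      (abs_sub_reflPt_mem_Icc_of_far ha.le hx hx' (Or.inr hxx'))

lemma abs_heatGammaDeriv_sub_le_farConst {a τ x x' : ℝ} (ha : 0 < a) (hτ : 0 < τ) (hτ1 : τ ≤ 1)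
    (hx : |x| ≤ 1 - 3 * a / 4) (hx' : |x'| ≤ 1) :
    |heatGammaDeriv x x' τ - heatKDeriv (x - x') τ| ≤ farConst a * Real.sqrt τ := by
  have hsum : Summable (fun k => heatKDeriv (x - reflPt x' k) τ) :=
    Summable.of_norm_bounded (summable_nearMajorant hτ)
      (abs_heatKDeriv_le_nearMajorant hτ (by linarith) hx')
  rw [heatGammaDeriv, hsum.tsum_eq_add_tsum_ite 0, reflPt_zero, add_sub_cancel_left,
    ← Real.norm_eq_abs]
  refine tsum_of_norm_bounded ((summable_farWeight a).hasSum.mul_right _) fun k => ?_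
  split_ifs with hk
  · rw [norm_zero]
    exact mul_nonneg (farWeight_nonneg ha k) (Real.sqrt_nonneg τ)
  · exact abs_heatKDeriv_le_farWeight ha hτ hτ1
      (abs_sub_reflPt_mem_Icc_of_far ha.le hx hx' (Or.inl hk))

lemma abs_heatGamma_sub_le {a τ c p z₁ z₂ : ℝ} (ha : 0 < a) (hτ : 0 ≤ τ) (hτ1 : τ ≤ 1)
    (hc : |c| ≤ 1 - a) (hp : |p| ≤ 1) (hpc : a ≤ |p - c|)
    (hz₁ : z₁ ∈ Metric.ball c (a / 4)) (hz₂ : z₂ ∈ Metric.ball c (a / 4)) :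
    |heatGamma z₁ p τ - heatGamma z₂ p τ| ≤ farConst a * Real.sqrt τ * |z₁ - z₂| := by
  rcases hτ.eq_or_lt with rfl | hτ
  · simp [heatGamma_zero_right]
  have hball : ∀ ζ ∈ Metric.ball c (a / 4), |ζ| ≤ 1 - 3 * a / 4 ∧ 3 * a / 4 ≤ |ζ - p| := by
    intro ζ hζ
    rw [Metric.mem_ball, Real.dist_eq] at hζ
    have h1 := abs_sub_abs_le_abs_sub ζ c
    have h2 := abs_sub_abs_le_abs_sub (p - c) (ζ - c)
    rw [sub_sub_sub_cancel_right, abs_sub_comm p ζ] at h2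
    constructor <;> linarith
  refine Convex.norm_image_sub_le_of_norm_hasDerivWithin_le
    (f := fun z => heatGamma z p τ) (f' := fun ζ => heatGammaDeriv ζ p τ)
    (fun ζ hζ => ?_) (fun ζ hζ => ?_)
    (convex_ball c (a / 4)) hz₂ hz₁
  · refine (hasDerivAt_heatGamma hτ hp ?_).hasDerivWithinAt
    have := abs_le.1 (hball ζ hζ).1
    constructor <;> linarith
  · exact abs_heatGammaDeriv_le_farConst ha hτ hτ1 (hball ζ hζ).1 hp (hball ζ hζ).2

lemma supNorm_nonneg (h : ℝ → ℝ) : 0 ≤ supNorm h :=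
  Real.iSup_nonneg fun _ => abs_nonneg _

lemma abs_le_supNorm {h : ℝ → ℝ} (hc : ContinuousOn h (Icc (-1) 1)) {y : ℝ}
    (hy : y ∈ Icc (-1 : ℝ) 1) : |h y| ≤ supNorm h := by
  have hbdd : BddAbove (range fun x : Icc (-1 : ℝ) 1 => |h x|) := by
    simpa only [image_eq_range] using isCompact_Icc.bddAbove_image hc.abs
  exact le_ciSup hbdd ⟨y, hy⟩

noncomputable def initialTerm (fI : ℝ → ℝ) (x t : ℝ) : ℝ :=
  ∫ x' in (-1 : ℝ)..1, heatGamma x x' t * fI x'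

noncomputable def sourceIntegrand (a : ℝ) (pn lamn : ℝ → ℝ) (x t s : ℝ) : ℝ :=
  (heatGamma x (pn s - a) (t - s) - heatGamma x (pn s + a) (t - s)) * lamn s

noncomputable def sourceTerm (a : ℝ) (pn lamn : ℝ → ℝ) (x t : ℝ) : ℝ :=
  ∫ s in (0 : ℝ)..t, sourceIntegrand a pn lamn x t s

lemma duhamelIterate_eq (a : ℝ) (fI pn lamn : ℝ → ℝ) (x t : ℝ) :
    duhamelIterate a fI pn lamn x t = initialTerm fI x t + sourceTerm a pn lamn x t := rfl

lemma hasDerivAt_initialTerm {fI : ℝ → ℝ} {x t : ℝ} (ht : 0 < t)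
    (hfI : ContinuousOn fI (Icc (-1) 1)) (hx : |x| ≤ 1) :
    HasDerivAt (fun z => initialTerm fI z t)
      (∫ x' in (-1 : ℝ)..1, heatGammaDeriv x x' t * fI x') x := by
  have hIoc : uIoc (-1 : ℝ) 1 = Ioc (-1) 1 := uIoc_of_le (by norm_num)
  have habs : ∀ x' ∈ Ioc (-1 : ℝ) 1, |x'| ≤ 1 := fun x' hx' => abs_le.2 ⟨hx'.1.le, hx'.2⟩
  have hball : ∀ z ∈ Metric.ball x 1, z ∈ Ioo (-3 : ℝ) 3 := by
    intro z hz
    rw [Metric.mem_ball, Real.dist_eq] at hz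
    have := abs_le.1 hx
    have := abs_lt.1 hz
    constructor <;> linarith
  have hball' : ∀ z ∈ Metric.ball x 1, |z| ≤ 3 := fun z hz =>
    abs_le.2 ⟨(hball z hz).1.le, (hball z hz).2.le⟩
  have hx3 : |x| ≤ 3 := hball' x (Metric.mem_ball_self one_pos)
  have hmeas : ∀ {g : ℝ → ℝ}, ContinuousOn g (Icc (-1) 1) →
      AEStronglyMeasurable g (volume.restrict (uIoc (-1 : ℝ) 1)) :=
    fun hg => by
      rw [hIoc]
      exact (hg.mono Ioc_subset_Icc_self).aestronglyMeasurable measurableSet_Ioc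
  refine (intervalIntegral.hasDerivAt_integral_of_dominated_loc_of_deriv_le
    (F := fun z x' => heatGamma z x' t * fI x')
    (F' := fun z x' => heatGammaDeriv z x' t * fI x') (a := -1) (b := 1)
    (μ := volume) (bound := fun _ => (∑' k, nearMajorant t k) * supNorm fI)
    (Metric.ball_mem_nhds x one_pos) ?_ ?_ ?_ ?_ ?_ ?_).2
  · filter_upwards [Metric.ball_mem_nhds x one_pos] with z hz
    exact hmeas ((continuousOn_heatGamma_right ht (hball' z hz)).mul hfI)
  · refine ContinuousOn.intervalIntegrable ?_
    rw [uIcc_of_le (by norm_num)]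
    exact (continuousOn_heatGamma_right ht hx3).mul hfI
  · exact hmeas ((continuousOn_heatGammaDeriv_right ht hx3).mul hfI)
  · refine .of_forall fun x' hx' z hz => ?_
    rw [hIoc] at hx'
    rw [Real.norm_eq_abs, abs_mul]
    exact mul_le_mul (abs_heatGammaDeriv_le ht (hball' z hz) (habs x' hx'))
      (abs_le_supNorm hfI (Ioc_subset_Icc_self hx')) (abs_nonneg _)
      (tsum_nonneg (nearMajorant_nonneg ht))
  · exact intervalIntegrable_const
  · refine .of_forall fun x' hx' z hz => ?_
    rw [hIoc] at hx'
    exact (hasDerivAt_heatGamma ht (habs x' hx') (hball z hz)).mul_const _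

lemma abs_integral_heatGammaDeriv_mul_le {a t x M : ℝ} {fI : ℝ → ℝ} (ha : 0 < a) (ht : 0 < t)
    (ht1 : t ≤ 1) (hx : |x| ≤ 1 - 3 * a / 4) (hM : ∀ x' ∈ Icc (-1 : ℝ) 1, |fI x'| ≤ M) :
    |∫ x' in (-1 : ℝ)..1, heatGammaDeriv x x' t * fI x'| ≤
      M * (1 / Real.sqrt t + 2 * farConst a * Real.sqrt t) := by
  have hM0 : 0 ≤ M := (abs_nonneg _).trans (hM 0 (by norm_num))
  have hcont : Continuous fun x' => |heatKDeriv (x - x') t| :=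
    ((continuous_heatKDeriv t).comp (continuous_const.sub continuous_id)).abs
  have hbound : ∀ x' ∈ Ioc (-1 : ℝ) 1, ‖heatGammaDeriv x x' t * fI x'‖ ≤
      (|heatKDeriv (x - x') t| + farConst a * Real.sqrt t) * M := by
    intro x' hx'
    have hdiff := abs_heatGammaDeriv_sub_le_farConst ha ht ht1 hx (abs_le.2 ⟨hx'.1.le, hx'.2⟩)
    rw [Real.norm_eq_abs, abs_mul]
    refine mul_le_mul ?_ (hM x' (Ioc_subset_Icc_self hx')) (abs_nonneg _)
      (add_nonneg (abs_nonneg _) (mul_nonneg (farConst_pos ha).le (Real.sqrt_nonneg t)))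
    linarith [abs_sub_abs_le_abs_sub (heatGammaDeriv x x' t) (heatKDeriv (x - x') t)]
  have hK : ∫ x' in (-1 : ℝ)..1, |heatKDeriv (x - x') t| ≤ 1 / Real.sqrt t := by
    rw [intervalIntegral.integral_comp_sub_left (fun y => |heatKDeriv y t|)]
    have := abs_le.1 hx
    exact integral_abs_heatKDeriv_le ht (by linarith) (by linarith)
  have hint : IntervalIntegrable
      (fun x' => (|heatKDeriv (x - x') t| + farConst a * Real.sqrt t) * M)
      volume (-1) 1 :=
    ((hcont.add continuous_const).mul continuous_const).intervalIntegrable _ _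
  calc |∫ x' in (-1 : ℝ)..1, heatGammaDeriv x x' t * fI x'|
      ≤ ∫ x' in (-1 : ℝ)..1, (|heatKDeriv (x - x') t| + farConst a * Real.sqrt t) * M :=
        intervalIntegral.norm_integral_le_of_norm_le (by norm_num) (.of_forall hbound) hint
    _ = M * ((∫ x' in (-1 : ℝ)..1, |heatKDeriv (x - x') t|) + 2 * farConst a * Real.sqrt t) := by
        rw [intervalIntegral.integral_mul_const, intervalIntegral.integral_add
          (hcont.intervalIntegrable _ _) intervalIntegrable_const, intervalIntegral.integral_const]
        norm_num
        ring
    _ ≤ M * (1 / Real.sqrt t + 2 * farConst a * Real.sqrt t) := by gcongr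

lemma abs_sourceIntegrand_sub_le {a t s M z₁ z₂ : ℝ} {pn lamn : ℝ → ℝ} (ha : 0 < a)
    (hs : s ∈ Icc 0 t) (ht1 : t ≤ 1) (hpn : |pn s| ≤ 1 - a)
    (hlam : |lamn s| ≤ 2 * M / Real.sqrt s)
    (hz₁ : z₁ ∈ Metric.ball (pn s) (a / 4)) (hz₂ : z₂ ∈ Metric.ball (pn s) (a / 4)) :
    |sourceIntegrand a pn lamn z₁ t s - sourceIntegrand a pn lamn z₂ t s| ≤
      4 * farConst a * M * Real.sqrt t * |z₁ - z₂| * s ^ (-(1 / 2) : ℝ) := by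
  have hτ : 0 ≤ t - s := sub_nonneg.2 hs.2
  have hτ1 : t - s ≤ 1 := by linarith [hs.1]
  have hsqrt : Real.sqrt (t - s) ≤ Real.sqrt t := Real.sqrt_le_sqrt (by linarith [hs.1])
  have hC := (farConst_pos ha).le
  rw [div_eq_mul_inv, Real.sqrt_eq_rpow, ← Real.rpow_neg hs.1] at hlam
  have hpm : |pn s - a| ≤ 1 ∧ |pn s + a| ≤ 1 := by
    have := abs_le.1 hpn
    exact ⟨abs_le.2 ⟨by linarith, by linarith⟩, abs_le.2 ⟨by linarith, by linarith⟩⟩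
  have hlip : ∀ p, |p| ≤ 1 → |p - pn s| = a →
      |heatGamma z₁ p (t - s) - heatGamma z₂ p (t - s)| ≤ farConst a * Real.sqrt t * |z₁ - z₂| :=
    fun p hp hpc => (abs_heatGamma_sub_le ha hτ hτ1 hpn hp hpc.ge hz₁ hz₂).trans (by gcongr)
  have hminus := hlip _ hpm.1 (by rw [sub_sub_cancel_left, abs_neg, abs_of_pos ha])
  have hplus := hlip _ hpm.2 (by rw [add_sub_cancel_left, abs_of_pos ha])
  have hkernel := abs_sub _ _ |>.trans (add_le_add hminus hplus)
  rw [sourceIntegrand, sourceIntegrand, ← sub_mul, abs_mul, sub_sub_sub_comm]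
  calc _ ≤ (farConst a * Real.sqrt t * |z₁ - z₂| + farConst a * Real.sqrt t * |z₁ - z₂|) *
        (2 * M * s ^ (-(1 / 2) : ℝ)) := mul_le_mul hkernel hlam (abs_nonneg _) (by positivity)
    _ = _ := by ring

lemma abs_sourceTerm_sub_le {a t M z₁ z₂ : ℝ} {pn lamn : ℝ → ℝ} (ha : 0 < a) (ht : 0 ≤ t)
    (ht1 : t ≤ 1) (hpn : ∀ s ∈ Ioc 0 t, |pn s| ≤ 1 - a)
    (hlam : ∀ s ∈ Ioc 0 t, |lamn s| ≤ 2 * M / Real.sqrt s)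
    (hz₁ : ∀ s ∈ Ioc 0 t, z₁ ∈ Metric.ball (pn s) (a / 4))
    (hz₂ : ∀ s ∈ Ioc 0 t, z₂ ∈ Metric.ball (pn s) (a / 4))
    (hi₁ : IntervalIntegrable (sourceIntegrand a pn lamn z₁ t) volume 0 t)
    (hi₂ : IntervalIntegrable (sourceIntegrand a pn lamn z₂ t) volume 0 t) :
    |sourceTerm a pn lamn z₁ t - sourceTerm a pn lamn z₂ t| ≤
      8 * farConst a * M * t * |z₁ - z₂| := by
  have hbound := intervalIntegral.norm_integral_le_of_norm_le ht
    (f := fun s => sourceIntegrand a pn lamn z₁ t s - sourceIntegrand a pn lamn z₂ t s)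
    (g := fun s => 4 * farConst a * M * Real.sqrt t * |z₁ - z₂| * s ^ (-(1 / 2) : ℝ))
    (.of_forall fun s hs => abs_sourceIntegrand_sub_le ha (Ioc_subset_Icc_self hs) ht1
      (hpn s hs) (hlam s hs) (hz₁ s hs) (hz₂ s hs))
    ((intervalIntegral.intervalIntegrable_rpow' (by norm_num)).const_mul _)
  rw [intervalIntegral.integral_const_mul, integral_rpow_neg_half,
    intervalIntegral.integral_sub hi₁ hi₂] at hbound
  calc _ ≤ 4 * farConst a * M * Real.sqrt t * |z₁ - z₂| * (2 * Real.sqrt t) := hbound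
    _ = 8 * farConst a * M * (Real.sqrt t * Real.sqrt t) * |z₁ - z₂| := by ring
    _ = 8 * farConst a * M * t * |z₁ - z₂| := by rw [Real.mul_self_sqrt ht]

lemma abs_deriv_duhamelIterate_le {a t r x : ℝ} {fI pn lamn : ℝ → ℝ} (ha : 0 < a) (ht : 0 < t)
    (ht1 : t ≤ 1) (hr : 0 < r) (hfI : ContinuousOn fI (Icc (-1) 1))
    (hpn : ∀ s ∈ Ioc 0 t, |pn s| ≤ 1 - a)
    (hlam : ∀ s ∈ Ioc 0 t, |lamn s| ≤ 2 * supNorm fI / Real.sqrt s)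
    (hnear : ∀ z ∈ Metric.ball x r, ∀ s ∈ Ioc 0 t, z ∈ Metric.ball (pn s) (a / 4)) :
    |deriv (fun z => duhamelIterate a fI pn lamn z t) x| ≤
      supNorm fI * (1 / Real.sqrt t + 2 * farConst a * Real.sqrt t) +
        8 * farConst a * supNorm fI * t := by
  have hxa : |x| ≤ 1 - 3 * a / 4 := by
    have hxt := hnear x (Metric.mem_ball_self hr) t ⟨ht, le_rfl⟩
    rw [Metric.mem_ball, Real.dist_eq] at hxt
    linarith [abs_sub_abs_le_abs_sub x (pn t), hpn t ⟨ht, le_rfl⟩]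
  have hA := hasDerivAt_initialTerm ht hfI (x := x) (by linarith)
  have hC := (farConst_pos ha).le
  have hM := supNorm_nonneg fI
  have hε : 0 ≤ 8 * farConst a * supNorm fI * t := by positivity
  simp only [duhamelIterate_eq]
  refine (abs_deriv_add_le_of_lipschitz_of_eq_zero_off (B := fun z => sourceTerm a pn lamn z t)
    (S := {z | IntervalIntegrable (sourceIntegrand a pn lamn z t) volume 0 t}) hA hε hr
    (fun z₁ h₁ z₂ h₂ => abs_sourceTerm_sub_le ha ht.le ht1 hpn hlam (hnear z₁ h₁.2)
      (hnear z₂ h₂.2) h₁.1 h₂.1)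
    (fun z _ hz => intervalIntegral.integral_undef hz)).trans ?_
  gcongr
  exact abs_integral_heatGammaDeriv_mul_le ha ht ht1 hxa fun _ => abs_le_supNorm hfI

end HeatKernel

open HeatKernel in
/-- Propagation of the `L^∞` gradient bound for the Duhamel iterate (Lemma 2.6):
for `t̄ ≤ c(a)`, the bound `|∂ₓ f(x,t)| ≤ 2‖f_I‖_{L^∞(−1,1)}/√t` propagates. -/
theorem statement7 (a : ℝ) (ha : a ∈ Set.Ioo (0:ℝ) 1) :
    ∃ c > (0:ℝ), ∀ (abar₀ tbar : ℝ) (fI : ℝ → ℝ) (pI : ℝ) (pn lamn : ℝ → ℝ),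
      ContDiffOn ℝ 2 fI (Set.Icc (-1) 1) → pI ∈ Set.Ioo (-1:ℝ) 1 →
      0 < abar₀ → abar₀ < a / 8 → tbar ≤ c →
      (∀ t, 0 < t → t < tbar →
        |pI - pn t| < abar₀ ∧ -1 ≤ pn t - a ∧ pn t + a ≤ 1 ∧
        |lamn t| ≤ 2 * supNorm fI / Real.sqrt t) →
      ∀ t, 0 < t → t < tbar → ∀ x, |x - pI| < abar₀ →
        |deriv (fun z => duhamelIterate a fI pn lamn z t) x|
          ≤ 2 * supNorm fI / Real.sqrt t := by
  obtain ⟨ha0, -⟩ := ha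
  have hC := farConst_pos ha0
  refine ⟨min 1 (16 * farConst a)⁻¹, by positivity, ?_⟩
  intro abar₀ tbar fI pI pn lamn hfI _ _ hab8 htbar hhyp t ht htt x hx
  have htc : t ≤ min 1 (16 * farConst a)⁻¹ := htt.le.trans htbar
  have ht1 : t ≤ 1 := htc.trans (min_le_left _ _)
  have hCt : 16 * farConst a * t ≤ 1 := by
    rw [mul_comm, ← le_inv_mul_iff₀' (by positivity), mul_one]
    exact htc.trans (min_le_right _ _)
  have hdata (s : ℝ) (hs : s ∈ Ioc 0 t) := hhyp s hs.1 (hs.2.trans_lt htt)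
  refine (abs_deriv_duhamelIterate_le ha0 ht ht1 (sub_pos.2 hx) hfI.continuousOn
    (fun s hs => ?_) (fun s hs => (hdata s hs).2.2.2) (fun z hz s hs => ?_)).trans
    (mul_one_div_sqrt_add_le hC.le (supNorm_nonneg fI) ht ht1 hCt)
  · obtain ⟨-, hlo, hhi, -⟩ := hdata s hs
    exact abs_le.2 ⟨by linarith, by linarith⟩
  · rw [Metric.mem_ball, Real.dist_eq] at hz ⊢
    linarith [abs_sub_le z x pI, abs_sub_le z pI (pn s), (hdata s hs).1]
end
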